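/- In the icl=2 gadget construction, the graph G has a perfect Γ-cycle packing if and only if T contains a perfect matching, that is, a subset M ⊆ T such that every element of X ∪ Y ∪ Z belongs to exactly one triple of M. -/

import Mathlib

open scoped Classical

/-- An `n`-partitioned compatibility graph: a finite directed graph on a finite
set of natural-number vertices, without self-loops, whose vertex set is
partitioned into `n` nonempty countries. -/
structure PartGraph (n : ℕ) where
  verts : Finset ℕ
  arcs : Finset (ℕ × ℕ)
  arcs_mem : ∀ p ∈ arcs, p.1 ∈ verts ∧ p.2 ∈ verts
  no_loops : ∀ v, (v, v) ∉ arcs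
  country : ℕ → Fin n
  country_nonempty : ∀ i : Fin n, ∃ v ∈ verts, country v = i

/-- Cyclic access to the entries of a list. -/
def cyc (l : List ℕ) (k : ℕ) : ℕ := l.getD (k % l.length) 0

/-- `l` is a (directed) cycle of `G`: a cyclic sequence of at least two distinct
vertices, consecutive ones (cyclically) joined by arcs. -/
def IsCycle {n : ℕ} (G : PartGraph n) (l : List ℕ) : Prop :=
  2 ≤ l.length ∧ l.Nodup ∧ (∀ v ∈ l, v ∈ G.verts) ∧
    ∀ k < l.length, (cyc l k, cyc l (k + 1)) ∈ G.arcs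

/-- All vertices of `l` belong to country `i`. -/
def IsNationalTo {n : ℕ} (G : PartGraph n) (l : List ℕ) (i : Fin n) : Prop :=
  ∀ v ∈ l, G.country v = i

/-- A national cycle: all vertices in one country. -/
def IsNational {n : ℕ} (G : PartGraph n) (l : List ℕ) : Prop :=
  ∃ i, IsNationalTo G l i

/-- An international cycle: not national (equivalently, for cycles, it contains
an international arc). -/
def IsInternational {n : ℕ} (G : PartGraph n) (l : List ℕ) : Prop :=
  ¬ IsNational G l

/-- Position `k` (taken cyclically) is the start of a `V_i`-segment of `l`:
the vertex there is in country `i` but the cyclically preceding one is not. -/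
def segStart {n : ℕ} (G : PartGraph n) (l : List ℕ) (i : Fin n) (k : ℕ) : Prop :=
  G.country (cyc l k) = i ∧ G.country (cyc l (k + l.length - 1)) ≠ i

/-- The size of the run of consecutive (cyclic) positions of `l`, starting at
position `k`, whose vertices are in country `i`.  At a segment start this is
exactly the size of that `V_i`-segment. -/
noncomputable def runLen {n : ℕ} (G : PartGraph n) (l : List ℕ) (i : Fin n) (k : ℕ) : ℕ :=
  ((Finset.range l.length).filter
    fun j => ∀ j' ≤ j, G.country (cyc l (k + j')) = i).card

/-- The number of `V_i`-segments of the cycle `l`. -/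
noncomputable def numSegs {n : ℕ} (G : PartGraph n) (l : List ℕ) (i : Fin n) : ℕ :=
  ((Finset.range l.length).filter fun k => segStart G l i k).card

/-- A set `Γ` of country-specific parameters for `n` countries. -/
structure Params (n : ℕ) where
  icl : ℕ∞
  ncl : Fin n → ℕ∞
  iss : Fin n → ℕ∞
  isn : Fin n → ℕ∞
  icl_ne_one : icl ≠ 1
  ncl_ne_one : ∀ i, ncl i ≠ 1
  iss_pos : ∀ i, 1 ≤ iss i
  isn_pos : ∀ i, 1 ≤ isn i

/-- `l` is a `Γ`-cycle of `(G, 𝒱)`. -/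
def IsGammaCycle {n : ℕ} (G : PartGraph n) (Γ : Params n) (l : List ℕ) : Prop :=
  IsCycle G l ∧
    ((∃ i, IsNationalTo G l i ∧ (l.length : ℕ∞) ≤ Γ.ncl i) ∨
      (IsInternational G l ∧ (l.length : ℕ∞) ≤ Γ.icl ∧
        (∀ i, ∀ k < l.length, segStart G l i k → (runLen G l i k : ℕ∞) ≤ Γ.iss i) ∧
        (∀ i, (numSegs G l i : ℕ∞) ≤ Γ.isn i)))

/-- A cycle packing of `G`: a set of pairwise vertex-disjoint cycles. -/
def IsPacking {n : ℕ} (G : PartGraph n) (P : Finset (List ℕ)) : Prop :=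
  (∀ l ∈ P, IsCycle G l) ∧
    ∀ l ∈ P, ∀ l' ∈ P, l ≠ l' → ∀ v ∈ l, v ∉ l'

/-- The size of a cycle packing: total number of arcs (= vertices) of its cycles. -/
def packSize (P : Finset (List ℕ)) : ℕ := ∑ l ∈ P, l.length

/-- A `Γ`-cycle packing of `(G, 𝒱)`. -/
def IsGammaPackingG {n : ℕ} (G : PartGraph n) (Γ : Params n) (P : Finset (List ℕ)) : Prop :=
  IsPacking G P ∧ ∀ l ∈ P, IsGammaCycle G Γ l


/-- The arcs of the `icl = 2` gadget associated with a triple `t = (x,y,z)`;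
`a t 0, …, a t 5` are the fresh vertices `a_i^1, …, a_i^6`. -/
def gadgetArcs2 (a : ℕ × ℕ × ℕ → Fin 6 → ℕ) (t : ℕ × ℕ × ℕ) : Finset (ℕ × ℕ) :=
  [(t.1, a t 0), (a t 0, t.1), (t.2.1, a t 2), (a t 2, t.2.1), (t.2.2, a t 4), (a t 4, t.2.2),
   (a t 0, a t 1), (a t 1, a t 0), (a t 2, a t 3), (a t 3, a t 2), (a t 4, a t 5), (a t 5, a t 4),
   (a t 1, a t 3), (a t 3, a t 5), (a t 5, a t 1)].toFinset

/-- The parameters `Γ = (2, icl = 2, ncl = (3,0), iss = (1,1), isn = (1,1))`. -/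
def gadgetParams2 : Params 2 where
  icl := 2
  ncl := fun i => if i = 0 then 3 else 0
  iss := fun _ => 1
  isn := fun _ => 1
  icl_ne_one := by norm_num
  ncl_ne_one := by intro i; split <;> norm_num
  iss_pos := fun _ => le_refl _
  isn_pos := fun _ => le_refl _

/-! Every Γ-cycle of this graph is a 2-cycle or a national cycle of length at most 3 in `V_1`.
Call `a_i^1, a_i^3, a_i^5` the ports and `a_i^2, a_i^4, a_i^6` the ring of the gadget of `t_i`.
A port lies in `V_2`, so it sits on a 2-cycle, either with its coordinate vertex or with its
ring neighbour. If port `k` takes its coordinate, ring vertex `k` has no 2-cycle partner left and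
lies on a national cycle; following the ring arcs, that cycle also contains ring vertex `k + 1`,
so port `k + 1` takes its coordinate too. Hence in each gadget either all three ports take their
coordinates or none does, and the triples of the first kind form a perfect matching. Conversely,
a perfect matching `M` gives the packing made of the coordinate 2-cycles and the ring triangle of
each triple in `M` and of the three port–ring 2-cycles of every other triple. -/

lemma cyc_mem {l : List ℕ} (hl : l ≠ []) (k : ℕ) : cyc l k ∈ l := by
  unfold cyc
  rw [List.getD_eq_getElem _ _ (Nat.mod_lt _ (List.length_pos_iff.2 hl))]
  exact List.getElem_mem _

lemma exists_cyc_eq {l : List ℕ} {v : ℕ} (h : v ∈ l) : ∃ k < l.length, cyc l k = v := by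
  obtain ⟨k, hk, rfl⟩ := List.mem_iff_getElem.1 h
  exact ⟨k, hk, by rw [cyc, Nat.mod_eq_of_lt hk, List.getD_eq_getElem _ _ hk]⟩

lemma cyc_pair (u w k : ℕ) :
    cyc [u, w] k = u ∧ cyc [u, w] (k + 1) = w ∨
      cyc [u, w] k = w ∧ cyc [u, w] (k + 1) = u := by
  rcases Nat.mod_two_eq_zero_or_one k with h | h
  · exact Or.inl (by simp [cyc, h, Nat.add_mod])
  · exact Or.inr (by simp [cyc, h, Nat.add_mod])

namespace IsCycle

variable {n : ℕ} {G : PartGraph n} {l : List ℕ}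

lemma exists_succ (hc : IsCycle G l) {v : ℕ} (hv : v ∈ l) : ∃ w ∈ l, (v, w) ∈ G.arcs := by
  obtain ⟨k, hk, rfl⟩ := exists_cyc_eq hv
  exact ⟨cyc l (k + 1), cyc_mem (List.ne_nil_of_mem hv) _, hc.2.2.2 k hk⟩

lemma exists_eq_pair (hc : IsCycle G l) (hl : l.length = 2) :
    ∃ u w, l = [u, w] ∧ (u, w) ∈ G.arcs ∧ (w, u) ∈ G.arcs := by
  match l, hl with
  | [u, w], _ =>
    exact ⟨u, w, rfl, hc.2.2.2 0 (by simp), by simpa [cyc] using hc.2.2.2 1 (by simp)⟩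

end IsCycle

lemma isCycle_pair {n : ℕ} {G : PartGraph n} {u w : ℕ} (hu : u ∈ G.verts) (hw : w ∈ G.verts)
    (huw : (u, w) ∈ G.arcs) (hwu : (w, u) ∈ G.arcs) : IsCycle G [u, w] := by
  have hne : u ≠ w := by rintro rfl; exact G.no_loops u huw
  refine ⟨by simp, by simpa using hne, by simp [hu, hw], fun k hk => ?_⟩
  simp only [List.length_cons, List.length_nil] at hk
  interval_cases k <;> simpa [cyc]

lemma isCycle_triple {n : ℕ} {G : PartGraph n} {u v w : ℕ}
    (hu : u ∈ G.verts) (hv : v ∈ G.verts) (hw : w ∈ G.verts)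
    (huv : (u, v) ∈ G.arcs) (hvw : (v, w) ∈ G.arcs) (hwu : (w, u) ∈ G.arcs)
    (huv' : u ≠ v) (huw' : u ≠ w) (hvw' : v ≠ w) : IsCycle G [u, v, w] := by
  refine ⟨by simp, by simp [*], by simp [hu, hv, hw], fun k hk => ?_⟩
  simp only [List.length_cons, List.length_nil] at hk
  interval_cases k <;> simpa [cyc]

lemma IsPacking.eq_of_mem {n : ℕ} {G : PartGraph n} {P : Finset (List ℕ)}
    (hP : IsPacking G P) {l l' : List ℕ} (hl : l ∈ P) (hl' : l' ∈ P) {v : ℕ} (hv : v ∈ l)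
    (hv' : v ∈ l') : l = l' := by
  by_contra hne
  exact hP.2 l hl l' hl' hne v hv hv'

lemma runLen_le_one {n : ℕ} {G : PartGraph n} {l : List ℕ}
    (halt : ∀ k, G.country (cyc l k) ≠ G.country (cyc l (k + 1))) (i : Fin n) (k : ℕ) :
    runLen G l i k ≤ 1 := by
  refine Finset.card_le_one.2 fun j₁ h₁ j₂ h₂ => ?_
  have key : ∀ j ∈ (Finset.range l.length).filter
      (fun j => ∀ j' ≤ j, G.country (cyc l (k + j')) = i), j = 0 := by
    intro j hj
    by_contra hj0
    have h0 := (Finset.mem_filter.1 hj).2 0 (Nat.zero_le _)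
    have h1 := (Finset.mem_filter.1 hj).2 1 (by omega)
    exact halt k (h0.trans h1.symm)
  rw [key j₁ h₁, key j₂ h₂]

lemma numSegs_pair_le_one {n : ℕ} {G : PartGraph n} {u w : ℕ}
    (hco : G.country u ≠ G.country w) (i : Fin n) : numSegs G [u, w] i ≤ 1 := by
  refine Finset.card_le_one.2 fun k₁ h₁ k₂ h₂ => ?_
  rw [Finset.mem_filter, Finset.mem_range] at h₁ h₂
  obtain ⟨hk₁, hc₁, -⟩ := h₁
  obtain ⟨hk₂, hc₂, -⟩ := h₂
  simp only [List.length_cons, List.length_nil] at hk₁ hk₂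
  interval_cases k₁ <;> interval_cases k₂ <;> simp_all [cyc]

lemma isGammaCycle_pair {n : ℕ} {G : PartGraph n} (Γ : Params n) (hicl : 2 ≤ Γ.icl)
    {u w : ℕ} (hu : u ∈ G.verts) (hw : w ∈ G.verts) (huw : (u, w) ∈ G.arcs) (hwu : (w, u) ∈ G.arcs)
    (hco : G.country u ≠ G.country w) : IsGammaCycle G Γ [u, w] := by
  refine ⟨isCycle_pair hu hw huw hwu, Or.inr ⟨?_, by simpa using hicl, ?_, ?_⟩⟩
  · rintro ⟨i, hi⟩
    exact hco ((hi u (by simp)).trans (hi w (by simp)).symm)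
  · intro i k _ _
    have halt : ∀ k, G.country (cyc [u, w] k) ≠ G.country (cyc [u, w] (k + 1)) := fun k => by
      rcases cyc_pair u w k with ⟨h₁, h₂⟩ | ⟨h₁, h₂⟩ <;> rw [h₁, h₂]
      exacts [hco, hco.symm]
    exact (Nat.cast_le.2 (runLen_le_one halt i k)).trans (Γ.iss_pos i)
  · exact fun i => (Nat.cast_le.2 (numSegs_pair_le_one hco i)).trans (Γ.isn_pos i)

lemma IsGammaCycle.national_or_length_eq_two {G : PartGraph 2} {l : List ℕ}
    (h : IsGammaCycle G gadgetParams2 l) : IsNationalTo G l 0 ∨ l.length = 2 := by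
  obtain ⟨hc, ⟨i, hnat, hlen⟩ | ⟨-, hlen, -⟩⟩ := h
  · fin_cases i
    · exact Or.inl hnat
    · have : l.length = 0 := by simpa [gadgetParams2] using hlen
      exact absurd hc.1 (by omega)
  · have hlen : (l.length : ℕ∞) ≤ 2 := hlen
    have : l.length ≤ 2 := by exact_mod_cast hlen
    exact Or.inr (by have := hc.1; omega)

lemma IsGammaCycle.national_or_pair {G : PartGraph 2} {l : List ℕ}
    (h : IsGammaCycle G gadgetParams2 l) {v : ℕ} (hv : v ∈ l) :
    IsNationalTo G l 0 ∨
      ∃ w ∈ l, (v, w) ∈ G.arcs ∧ (w, v) ∈ G.arcs ∧ ∀ x ∈ l, x = v ∨ x = w := by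
  refine h.national_or_length_eq_two.imp_right fun hl => ?_
  obtain ⟨u, w, rfl, huw, hwu⟩ := h.1.exists_eq_pair hl
  simp only [List.mem_cons, List.not_mem_nil, or_false] at hv ⊢
  rcases hv with rfl | rfl
  · exact ⟨w, by simp, huw, hwu, fun x hx => hx⟩
  · exact ⟨u, by simp, hwu, huw, fun x hx => hx.symm⟩

def coord (t : ℕ × ℕ × ℕ) : Fin 3 → ℕ := ![t.1, t.2.1, t.2.2]

-- `a t (portIdx k)` and `a t (ringIdx k)` are the paper's `a_i^(2k+1)` and `a_i^(2k+2)`.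
def portIdx (k : Fin 3) : Fin 6 := ⟨2 * k, by omega⟩

def ringIdx (k : Fin 3) : Fin 6 := ⟨2 * k + 1, by omega⟩

lemma mem_gadgetArcs2 {a : ℕ × ℕ × ℕ → Fin 6 → ℕ} {t : ℕ × ℕ × ℕ} {p : ℕ × ℕ} :
    p ∈ gadgetArcs2 a t ↔ ∃ k,
      p = (coord t k, a t (portIdx k)) ∨ p = (a t (portIdx k), coord t k) ∨
      p = (a t (portIdx k), a t (ringIdx k)) ∨ p = (a t (ringIdx k), a t (portIdx k)) ∨
      p = (a t (ringIdx k), a t (ringIdx (k + 1))) := by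
  simp only [gadgetArcs2, List.mem_toFinset, List.mem_cons, List.not_mem_nil, or_false,
    Fin.exists_fin_succ, Fin.exists_fin_zero]
  simp [coord, portIdx, ringIdx, Fin.succ, Fin.add_def]
  tauto

lemma portIdx_injective : Function.Injective portIdx := by decide

lemma ringIdx_injective : Function.Injective ringIdx := by decide

lemma portIdx_ne_ringIdx (k k' : Fin 3) : portIdx k ≠ ringIdx k' := by revert k k'; decide

lemma exists_coord_eq_iff {t : ℕ × ℕ × ℕ} {u : ℕ} :
    (∃ k, u = coord t k) ↔ u = t.1 ∨ u = t.2.1 ∨ u = t.2.2 := by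
  simp [Fin.exists_fin_succ, coord]

structure IsGadget2 (X Y Z : Finset ℕ) (T : Finset (ℕ × ℕ × ℕ))
    (a : ℕ × ℕ × ℕ → Fin 6 → ℕ) (G : PartGraph 2) : Prop where
  disjoint_XY : Disjoint X Y
  disjoint_XZ : Disjoint X Z
  disjoint_YZ : Disjoint Y Z
  triple_mem : ∀ t ∈ T, t.1 ∈ X ∧ t.2.1 ∈ Y ∧ t.2.2 ∈ Z
  fresh : ∀ t ∈ T, ∀ j, a t j ∉ X ∪ Y ∪ Z
  inj : ∀ t ∈ T, ∀ t' ∈ T, ∀ j j', a t j = a t' j' → t = t' ∧ j = j'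
  verts_eq : G.verts = (X ∪ Y ∪ Z) ∪ T.biUnion fun t => Finset.image (a t) Finset.univ
  arcs_eq : G.arcs = T.biUnion fun t => gadgetArcs2 a t
  country_eq : ∀ v, G.country v =
    if ∃ t ∈ T, v = a t 0 ∨ v = a t 2 ∨ v = a t 4 then 1 else 0

namespace IsGadget2

variable {X Y Z : Finset ℕ} {T : Finset (ℕ × ℕ × ℕ)} {a : ℕ × ℕ × ℕ → Fin 6 → ℕ}
  {G : PartGraph 2} {t t' : ℕ × ℕ × ℕ} {u w : ℕ}

lemma coord_mem (hG : IsGadget2 X Y Z T a G) (ht : t ∈ T) (k : Fin 3) :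
    coord t k ∈ X ∪ Y ∪ Z := by
  obtain ⟨hx, hy, hz⟩ := hG.triple_mem t ht
  fin_cases k <;> simp [coord, hx, hy, hz]

lemma coord_injective (hG : IsGadget2 X Y Z T a G) (ht : t ∈ T) :
    Function.Injective (coord t) := by
  obtain ⟨hx, hy, hz⟩ := hG.triple_mem t ht
  have hXY := Finset.disjoint_left.1 hG.disjoint_XY
  have hXZ := Finset.disjoint_left.1 hG.disjoint_XZ
  have hYZ := Finset.disjoint_left.1 hG.disjoint_YZ
  intro k k' h
  fin_cases k <;> fin_cases k' <;> simp_all [coord]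

lemma a_ne_coord (hG : IsGadget2 X Y Z T a G) (ht : t ∈ T) (ht' : t' ∈ T) (j : Fin 6)
    (k : Fin 3) : a t j ≠ coord t' k :=
  fun h => hG.fresh t ht j (h ▸ hG.coord_mem ht' k)

lemma a_eq_a_iff (hG : IsGadget2 X Y Z T a G) (ht : t ∈ T) (ht' : t' ∈ T) {j j' : Fin 6} :
    a t j = a t' j' ↔ t = t' ∧ j = j' :=
  ⟨hG.inj t ht t' ht' j j', by rintro ⟨rfl, rfl⟩; rfl⟩

lemma a_mem_verts (hG : IsGadget2 X Y Z T a G) (ht : t ∈ T) (j : Fin 6) : a t j ∈ G.verts := by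
  rw [hG.verts_eq]
  exact Finset.mem_union_right _ (Finset.mem_biUnion.2 ⟨t, ht, by simp⟩)

lemma mem_verts (hG : IsGadget2 X Y Z T a G) (hu : u ∈ X ∪ Y ∪ Z) : u ∈ G.verts := by
  rw [hG.verts_eq]
  exact Finset.mem_union_left _ hu

lemma country_eq_zero (hG : IsGadget2 X Y Z T a G) (hu : u ∈ X ∪ Y ∪ Z) :
    G.country u = 0 := by
  rw [hG.country_eq, if_neg]
  rintro ⟨t, ht, h | h | h⟩ <;> exact hG.fresh t ht _ (h ▸ hu)

lemma country_a_portIdx (hG : IsGadget2 X Y Z T a G) (ht : t ∈ T) (k : Fin 3) :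
    G.country (a t (portIdx k)) = 1 := by
  rw [hG.country_eq, if_pos]
  fin_cases k
  exacts [⟨t, ht, Or.inl rfl⟩, ⟨t, ht, Or.inr (Or.inl rfl)⟩,
    ⟨t, ht, Or.inr (Or.inr rfl)⟩]

lemma country_a_ringIdx (hG : IsGadget2 X Y Z T a G) (ht : t ∈ T) (k : Fin 3) :
    G.country (a t (ringIdx k)) = 0 := by
  rw [hG.country_eq, if_neg]
  rintro ⟨t', ht', h⟩
  simp only [hG.a_eq_a_iff ht ht'] at h
  fin_cases k <;> simp [ringIdx] at h

lemma gadgetArcs2_subset (hG : IsGadget2 X Y Z T a G) (ht : t ∈ T) :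
    gadgetArcs2 a t ⊆ G.arcs := by
  rw [hG.arcs_eq]
  exact Finset.subset_biUnion_of_mem _ ht

lemma exists_of_arc_from_base (hG : IsGadget2 X Y Z T a G) (hu : u ∈ X ∪ Y ∪ Z)
    (h : (u, w) ∈ G.arcs) : ∃ t ∈ T, ∃ k, u = coord t k ∧ w = a t (portIdx k) := by
  rw [hG.arcs_eq, Finset.mem_biUnion] at h
  obtain ⟨t, ht, h⟩ := h
  obtain ⟨k, h⟩ := mem_gadgetArcs2.1 h
  simp only [Prod.mk.injEq] at h
  rcases h with h | ⟨h, -⟩ | ⟨h, -⟩ | ⟨h, -⟩ | ⟨h, -⟩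
  · exact ⟨t, ht, k, h⟩
  all_goals exact absurd (h ▸ hu) (hG.fresh t ht _)

lemma eq_of_arc_from_portIdx (hG : IsGadget2 X Y Z T a G) (ht : t ∈ T) {k : Fin 3}
    (h : (a t (portIdx k), w) ∈ G.arcs) : w = coord t k ∨ w = a t (ringIdx k) := by
  rw [hG.arcs_eq, Finset.mem_biUnion] at h
  obtain ⟨t', ht', h⟩ := h
  obtain ⟨k', h⟩ := mem_gadgetArcs2.1 h
  simp only [Prod.mk.injEq, hG.a_eq_a_iff ht ht', portIdx_injective.eq_iff,
    portIdx_ne_ringIdx] at h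
  rcases h with ⟨h, -⟩ | ⟨⟨rfl, rfl⟩, rfl⟩ | ⟨⟨rfl, rfl⟩, rfl⟩ | ⟨⟨-, ⟨⟩⟩, -⟩ |
    ⟨⟨-, ⟨⟩⟩, -⟩
  · exact absurd h (hG.a_ne_coord ht ht' _ _)
  · exact Or.inl rfl
  · exact Or.inr rfl

lemma eq_of_arc_from_ringIdx (hG : IsGadget2 X Y Z T a G) (ht : t ∈ T) {k : Fin 3}
    (h : (a t (ringIdx k), w) ∈ G.arcs) : w = a t (portIdx k) ∨ w = a t (ringIdx (k + 1)) := by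
  rw [hG.arcs_eq, Finset.mem_biUnion] at h
  obtain ⟨t', ht', h⟩ := h
  obtain ⟨k', h⟩ := mem_gadgetArcs2.1 h
  simp only [Prod.mk.injEq, hG.a_eq_a_iff ht ht', ringIdx_injective.eq_iff,
    (portIdx_ne_ringIdx _ _).symm] at h
  rcases h with ⟨h, -⟩ | ⟨⟨-, ⟨⟩⟩, -⟩ | ⟨⟨-, ⟨⟩⟩, -⟩ | ⟨⟨rfl, rfl⟩, rfl⟩ |
    ⟨⟨rfl, rfl⟩, rfl⟩
  · exact absurd h (hG.a_ne_coord ht ht' _ _)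
  · exact Or.inl rfl
  · exact Or.inr rfl

end IsGadget2

def PortPaired (P : Finset (List ℕ)) (a : ℕ × ℕ × ℕ → Fin 6 → ℕ) (t : ℕ × ℕ × ℕ)
    (k : Fin 3) : Prop :=
  ∃ l ∈ P, a t (portIdx k) ∈ l ∧ coord t k ∈ l

namespace IsGadget2

variable {X Y Z : Finset ℕ} {T : Finset (ℕ × ℕ × ℕ)} {a : ℕ × ℕ × ℕ → Fin 6 → ℕ}
  {G : PartGraph 2} {P : Finset (List ℕ)} {l : List ℕ} {t t' : ℕ × ℕ × ℕ} {k k' : Fin 3}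
  {u : ℕ}

lemma a_portIdx_not_mem (hG : IsGadget2 X Y Z T a G) (ht : t ∈ T) (hl : IsNationalTo G l 0) :
    a t (portIdx k) ∉ l := fun h => by
  simpa [hG.country_a_portIdx ht] using hl _ h

lemma exists_pair_of_a_portIdx_mem (hG : IsGadget2 X Y Z T a G)
    (hP : IsGammaPackingG G gadgetParams2 P) (ht : t ∈ T) (hl : l ∈ P)
    (hp : a t (portIdx k) ∈ l) :
    ∃ w ∈ l, (a t (portIdx k), w) ∈ G.arcs ∧ ∀ x ∈ l, x = a t (portIdx k) ∨ x = w := by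
  rcases (hP.2 l hl).national_or_pair hp with hnat | ⟨w, hw, hpw, -, hl2⟩
  · exact absurd hp (hG.a_portIdx_not_mem ht hnat)
  · exact ⟨w, hw, hpw, hl2⟩

lemma coord_mem_iff_a_ringIdx_not_mem (hG : IsGadget2 X Y Z T a G)
    (hP : IsGammaPackingG G gadgetParams2 P) (ht : t ∈ T) (hl : l ∈ P)
    (hp : a t (portIdx k) ∈ l) : coord t k ∈ l ↔ a t (ringIdx k) ∉ l := by
  obtain ⟨w, hw, hpw, hl2⟩ := hG.exists_pair_of_a_portIdx_mem hP ht hl hp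
  have hpr : a t (portIdx k) ≠ a t (ringIdx k) := by
    simp [hG.a_eq_a_iff ht ht, portIdx_ne_ringIdx]
  have hrc := hG.a_ne_coord ht ht (ringIdx k) k
  have hpc := hG.a_ne_coord ht ht (portIdx k) k
  rcases hG.eq_of_arc_from_portIdx ht hpw with rfl | rfl
  · refine iff_of_true hw fun hr => ?_
    rcases hl2 _ hr with h | h
    exacts [hpr h.symm, hrc h]
  · refine iff_of_false (fun hc => ?_) (not_not.2 hw)
    rcases hl2 _ hc with h | h
    exacts [hpc h.symm, hrc h.symm]

lemma exists_national_of_portPaired (hG : IsGadget2 X Y Z T a G)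
    (hP : IsGammaPackingG G gadgetParams2 P) (hcov : ∀ v ∈ G.verts, ∃ l ∈ P, v ∈ l)
    (ht : t ∈ T) (hk : PortPaired P a t k) :
    ∃ l ∈ P, IsNationalTo G l 0 ∧ a t (ringIdx (k + 1)) ∈ l := by
  obtain ⟨l₀, hl₀, hp₀, hc₀⟩ := hk
  obtain ⟨l, hl, hq⟩ := hcov _ (hG.a_mem_verts ht (ringIdx k))
  -- Port `k` is taken by its coordinate, and the ring arcs are not reversible.
  have hnat : IsNationalTo G l 0 := by
    rcases (hP.2 l hl).national_or_pair hq with hnat | ⟨w, hw, hqw, hwq, -⟩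
    · exact hnat
    rcases hG.eq_of_arc_from_ringIdx ht hqw with rfl | rfl
    · rw [hP.1.eq_of_mem hl hl₀ hw hp₀] at hq
      exact absurd hq ((hG.coord_mem_iff_a_ringIdx_not_mem hP ht hl₀ hp₀).1 hc₀)
    · exfalso
      rcases hG.eq_of_arc_from_ringIdx ht hwq with h | h <;> rw [hG.a_eq_a_iff ht ht] at h
      · exact portIdx_ne_ringIdx _ _ h.2.symm
      · have := ringIdx_injective h.2
        fin_cases k <;> simp at this
  obtain ⟨w, hw, hqw⟩ := (hP.1.1 l hl).exists_succ hq
  rcases hG.eq_of_arc_from_ringIdx ht hqw with rfl | rfl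
  · exact absurd hw (hG.a_portIdx_not_mem ht hnat)
  · exact ⟨l, hl, hnat, hw⟩

lemma portPaired_of_national (hG : IsGadget2 X Y Z T a G)
    (hP : IsGammaPackingG G gadgetParams2 P) (hcov : ∀ v ∈ G.verts, ∃ l ∈ P, v ∈ l)
    (ht : t ∈ T) (hl : l ∈ P) (hnat : IsNationalTo G l 0) (hr : a t (ringIdx k) ∈ l) :
    PortPaired P a t k := by
  obtain ⟨l', hl', hp⟩ := hcov _ (hG.a_mem_verts ht (portIdx k))
  refine ⟨l', hl', hp, (hG.coord_mem_iff_a_ringIdx_not_mem hP ht hl' hp).2 fun hr' => ?_⟩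
  rw [hP.1.eq_of_mem hl' hl hr' hr] at hp
  exact hG.a_portIdx_not_mem ht hnat hp

lemma portPaired_succ (hG : IsGadget2 X Y Z T a G)
    (hP : IsGammaPackingG G gadgetParams2 P) (hcov : ∀ v ∈ G.verts, ∃ l ∈ P, v ∈ l)
    (ht : t ∈ T) (hk : PortPaired P a t k) : PortPaired P a t (k + 1) := by
  obtain ⟨l, hl, hnat, hr⟩ := hG.exists_national_of_portPaired hP hcov ht hk
  exact hG.portPaired_of_national hP hcov ht hl hnat hr

lemma portPaired_iff_zero (hG : IsGadget2 X Y Z T a G)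
    (hP : IsGammaPackingG G gadgetParams2 P) (hcov : ∀ v ∈ G.verts, ∃ l ∈ P, v ∈ l)
    (ht : t ∈ T) : PortPaired P a t k ↔ PortPaired P a t 0 := by
  have succ := fun k => hG.portPaired_succ hP hcov ht (k := k)
  fin_cases k
  · rfl
  · exact ⟨fun h => succ 2 (succ 1 h), succ 0⟩
  · exact ⟨succ 2, fun h => succ 1 (succ 0 h)⟩

lemma exists_portPaired (hG : IsGadget2 X Y Z T a G) (hP : IsGammaPackingG G gadgetParams2 P)
    (hcov : ∀ v ∈ G.verts, ∃ l ∈ P, v ∈ l) (hu : u ∈ X ∪ Y ∪ Z) :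
    ∃ t ∈ T, ∃ k, u = coord t k ∧ PortPaired P a t k := by
  obtain ⟨l, hl, hul⟩ := hcov u (hG.mem_verts hu)
  obtain ⟨w, hw, huw⟩ := (hP.1.1 l hl).exists_succ hul
  obtain ⟨t, ht, k, rfl, rfl⟩ := hG.exists_of_arc_from_base hu huw
  exact ⟨t, ht, k, rfl, l, hl, hw, hul⟩

lemma eq_of_portPaired (hG : IsGadget2 X Y Z T a G) (hP : IsGammaPackingG G gadgetParams2 P)
    (ht : t ∈ T) (ht' : t' ∈ T) (hk : PortPaired P a t k) (hk' : PortPaired P a t' k')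
    (h : coord t k = coord t' k') : t = t' := by
  obtain ⟨l, hl, hp, hc⟩ := hk
  obtain ⟨l', hl', hp', hc'⟩ := hk'
  rw [hP.1.eq_of_mem hl' hl hc' (h ▸ hc)] at hp'
  obtain ⟨w, -, -, hl2⟩ := hG.exists_pair_of_a_portIdx_mem hP ht hl hp
  have hcw : coord t k = w := (hl2 _ hc).resolve_left (hG.a_ne_coord ht ht _ _).symm
  rcases hl2 _ hp' with h' | h'
  · exact ((hG.a_eq_a_iff ht' ht).1 h').1.symm
  · exact absurd (h'.trans hcw.symm) (hG.a_ne_coord ht' ht _ _)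

lemma exists_matching (hG : IsGadget2 X Y Z T a G) (hP : IsGammaPackingG G gadgetParams2 P)
    (hcov : ∀ v ∈ G.verts, ∃ l ∈ P, v ∈ l) :
    ∃ M ⊆ T, ∀ u ∈ X ∪ Y ∪ Z, ∃! t, t ∈ M ∧ (u = t.1 ∨ u = t.2.1 ∨ u = t.2.2) := by
  refine ⟨T.filter (PortPaired P a · 0), Finset.filter_subset _ _, fun u hu => ?_⟩
  obtain ⟨t, ht, k, rfl, hk⟩ := hG.exists_portPaired hP hcov hu
  refine ⟨t, ⟨Finset.mem_filter.2 ⟨ht, (hG.portPaired_iff_zero hP hcov ht).1 hk⟩,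
    exists_coord_eq_iff.1 ⟨k, rfl⟩⟩, ?_⟩
  rintro t' ⟨ht'M, hu'⟩
  obtain ⟨k', hk'u⟩ := exists_coord_eq_iff.2 hu'
  obtain ⟨ht', hk'⟩ := Finset.mem_filter.1 ht'M
  exact hG.eq_of_portPaired hP ht' ht ((hG.portPaired_iff_zero hP hcov ht').2 hk') hk hk'u.symm

end IsGadget2

def gadgetCycle (M : Finset (ℕ × ℕ × ℕ)) (a : ℕ × ℕ × ℕ → Fin 6 → ℕ) (t : ℕ × ℕ × ℕ) :
    Fin 6 → List ℕ :=
  if t ∈ M then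
    ![[t.1, a t 0], [a t 1, a t 3, a t 5], [t.2.1, a t 2], [a t 1, a t 3, a t 5],
      [t.2.2, a t 4], [a t 1, a t 3, a t 5]]
  else
    ![[a t 0, a t 1], [a t 0, a t 1], [a t 2, a t 3], [a t 2, a t 3], [a t 4, a t 5],
      [a t 4, a t 5]]

lemma a_mem_gadgetCycle (M : Finset (ℕ × ℕ × ℕ)) (a : ℕ × ℕ × ℕ → Fin 6 → ℕ)
    (t : ℕ × ℕ × ℕ) (j : Fin 6) : a t j ∈ gadgetCycle M a t j := by
  unfold gadgetCycle
  split_ifs <;> fin_cases j <;> simp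

lemma coord_mem_gadgetCycle {M : Finset (ℕ × ℕ × ℕ)} (a : ℕ × ℕ × ℕ → Fin 6 → ℕ)
    {t : ℕ × ℕ × ℕ} (htM : t ∈ M) (k : Fin 3) :
    coord t k ∈ gadgetCycle M a t (portIdx k) := by
  fin_cases k <;> simp [gadgetCycle, htM, coord, portIdx]

lemma eq_a_or_coord_of_mem_gadgetCycle {M : Finset (ℕ × ℕ × ℕ)}
    {a : ℕ × ℕ × ℕ → Fin 6 → ℕ} {t : ℕ × ℕ × ℕ} {j : Fin 6} {v : ℕ}
    (hv : v ∈ gadgetCycle M a t j) :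
    (∃ i, v = a t i) ∨ (t ∈ M ∧ ∃ k, v = coord t k ∧ j = portIdx k) := by
  unfold gadgetCycle at hv
  split_ifs at hv with htM <;> fin_cases j <;> simp at hv <;>
    rcases hv with rfl | rfl | rfl <;>
    first
    | exact Or.inl ⟨_, rfl⟩
    | exact Or.inr ⟨htM, 0, rfl, rfl⟩
    | exact Or.inr ⟨htM, 1, rfl, rfl⟩
    | exact Or.inr ⟨htM, 2, rfl, rfl⟩

namespace IsGadget2

variable {X Y Z : Finset ℕ} {T : Finset (ℕ × ℕ × ℕ)} {a : ℕ × ℕ × ℕ → Fin 6 → ℕ}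
  {G : PartGraph 2} {M : Finset (ℕ × ℕ × ℕ)} {t t' : ℕ × ℕ × ℕ} {i j j' : Fin 6}
  {v : ℕ}

lemma isGammaCycle_gadgetCycle (hG : IsGadget2 X Y Z T a G) (ht : t ∈ T) (j : Fin 6) :
    IsGammaCycle G gadgetParams2 (gadgetCycle M a t j) := by
  have arc {p} (hp : p ∈ gadgetArcs2 a t) : p ∈ G.arcs := hG.gadgetArcs2_subset ht hp
  have hne {i i'} (h : i ≠ i') : a t i ≠ a t i' := fun h' => h ((hG.a_eq_a_iff ht ht).1 h').2
  have base (k : Fin 3) : IsGammaCycle G gadgetParams2 [coord t k, a t (portIdx k)] :=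
    isGammaCycle_pair _ le_rfl (hG.mem_verts (hG.coord_mem ht k)) (hG.a_mem_verts ht _)
      (arc (mem_gadgetArcs2.2 ⟨k, by simp⟩)) (arc (mem_gadgetArcs2.2 ⟨k, by simp⟩))
      (by rw [hG.country_eq_zero (hG.coord_mem ht k), hG.country_a_portIdx ht]; decide)
  have pair (k : Fin 3) : IsGammaCycle G gadgetParams2 [a t (portIdx k), a t (ringIdx k)] :=
    isGammaCycle_pair _ le_rfl (hG.a_mem_verts ht _) (hG.a_mem_verts ht _)
      (arc (mem_gadgetArcs2.2 ⟨k, by simp⟩)) (arc (mem_gadgetArcs2.2 ⟨k, by simp⟩))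
      (by rw [hG.country_a_portIdx ht, hG.country_a_ringIdx ht]; decide)
  have ring : IsGammaCycle G gadgetParams2 [a t 1, a t 3, a t 5] := by
    refine ⟨isCycle_triple (hG.a_mem_verts ht _) (hG.a_mem_verts ht _) (hG.a_mem_verts ht _)
      (arc (mem_gadgetArcs2.2 ⟨0, by simp [ringIdx]⟩))
      (arc (mem_gadgetArcs2.2 ⟨1, by simp [ringIdx]⟩))
      (arc (mem_gadgetArcs2.2 ⟨2, by simp [ringIdx]⟩)) (hne (by decide)) (hne (by decide))
      (hne (by decide)), Or.inl ⟨0, ?_, le_rfl⟩⟩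
    intro v hv
    simp only [List.mem_cons, List.not_mem_nil, or_false] at hv
    rcases hv with rfl | rfl | rfl
    exacts [hG.country_a_ringIdx ht 0, hG.country_a_ringIdx ht 1, hG.country_a_ringIdx ht 2]
  unfold gadgetCycle
  split_ifs
  · fin_cases j
    exacts [base 0, ring, base 1, ring, base 2, ring]
  · fin_cases j
    exacts [pair 0, pair 0, pair 1, pair 1, pair 2, pair 2]

lemma gadgetCycle_eq_of_a_mem (hG : IsGadget2 X Y Z T a G) (ht : t ∈ T)
    (h : a t i ∈ gadgetCycle M a t j) : gadgetCycle M a t i = gadgetCycle M a t j := by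
  have hx : a t i ≠ t.1 := hG.a_ne_coord ht ht i 0
  have hy : a t i ≠ t.2.1 := hG.a_ne_coord ht ht i 1
  have hz : a t i ≠ t.2.2 := hG.a_ne_coord ht ht i 2
  unfold gadgetCycle at h ⊢
  split_ifs at h ⊢ <;> fin_cases j <;> simp [hG.a_eq_a_iff ht ht, hx, hy, hz] at h <;>
    rcases h with rfl | rfl | rfl <;> rfl

lemma gadgetCycle_eq_of_mem (hG : IsGadget2 X Y Z T a G)
    (hM : ∀ u ∈ X ∪ Y ∪ Z, ∃! t, t ∈ M ∧ (u = t.1 ∨ u = t.2.1 ∨ u = t.2.2))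
    (ht : t ∈ T) (ht' : t' ∈ T) (hv : v ∈ gadgetCycle M a t j)
    (hv' : v ∈ gadgetCycle M a t' j') : gadgetCycle M a t j = gadgetCycle M a t' j' := by
  rcases eq_a_or_coord_of_mem_gadgetCycle hv with ⟨i, rfl⟩ | ⟨htM, k, rfl, rfl⟩ <;>
    rcases eq_a_or_coord_of_mem_gadgetCycle hv' with ⟨i', h⟩ | ⟨ht'M, k', h, rfl⟩
  · obtain ⟨rfl, rfl⟩ := (hG.a_eq_a_iff ht ht').1 h
    rw [← hG.gadgetCycle_eq_of_a_mem ht hv, hG.gadgetCycle_eq_of_a_mem ht hv']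
  · exact absurd h (hG.a_ne_coord ht ht' _ _)
  · exact absurd h.symm (hG.a_ne_coord ht' ht _ _)
  · obtain rfl : t = t' := (hM _ (hG.coord_mem ht k)).unique
      ⟨htM, exists_coord_eq_iff.1 ⟨k, rfl⟩⟩ ⟨ht'M, exists_coord_eq_iff.1 ⟨k', h⟩⟩
    rw [hG.coord_injective ht h]

lemma exists_packing_of_matching (hG : IsGadget2 X Y Z T a G) (hMT : M ⊆ T)
    (hM : ∀ u ∈ X ∪ Y ∪ Z, ∃! t, t ∈ M ∧ (u = t.1 ∨ u = t.2.1 ∨ u = t.2.2)) :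
    ∃ P : Finset (List ℕ), IsGammaPackingG G gadgetParams2 P ∧
      ∀ v ∈ G.verts, ∃ l ∈ P, v ∈ l := by
  set P := T.biUnion fun t => Finset.univ.image (gadgetCycle M a t)
  have mem_P {t} (ht : t ∈ T) (j) : gadgetCycle M a t j ∈ P :=
    Finset.mem_biUnion.2 ⟨t, ht, Finset.mem_image_of_mem _ (Finset.mem_univ j)⟩
  have cases_P {l} (hl : l ∈ P) : ∃ t ∈ T, ∃ j, gadgetCycle M a t j = l := by
    simpa [P] using hl
  have hΓ : ∀ l ∈ P, IsGammaCycle G gadgetParams2 l := fun l hl => by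
    obtain ⟨t, ht, j, rfl⟩ := cases_P hl
    exact hG.isGammaCycle_gadgetCycle ht j
  refine ⟨P, ⟨⟨fun l hl => (hΓ l hl).1, fun l hl l' hl' hne v hv hv' => hne ?_⟩, hΓ⟩, ?_⟩
  · obtain ⟨t, ht, j, rfl⟩ := cases_P hl
    obtain ⟨t', ht', j', rfl⟩ := cases_P hl'
    exact hG.gadgetCycle_eq_of_mem hM ht ht' hv hv'
  · intro v hv
    rcases Finset.mem_union.1 (hG.verts_eq ▸ hv) with hu | ha
    · obtain ⟨t, ⟨htM, hu⟩, -⟩ := hM v hu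
      obtain ⟨k, rfl⟩ := exists_coord_eq_iff.2 hu
      exact ⟨_, mem_P (hMT htM) (portIdx k), coord_mem_gadgetCycle a htM k⟩
    · obtain ⟨t, ht, hj⟩ := Finset.mem_biUnion.1 ha
      obtain ⟨j, -, rfl⟩ := Finset.mem_image.1 hj
      exact ⟨_, mem_P ht j, a_mem_gadgetCycle M a t j⟩

end IsGadget2

theorem gadget2_perfect_packing_iff_matching_general
    (X Y Z : Finset ℕ) (T : Finset (ℕ × ℕ × ℕ)) (a : ℕ × ℕ × ℕ → Fin 6 → ℕ)
    (hXY : Disjoint X Y) (hXZ : Disjoint X Z) (hYZ : Disjoint Y Z)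
    (hTsub : ∀ t ∈ T, t.1 ∈ X ∧ t.2.1 ∈ Y ∧ t.2.2 ∈ Z)
    (hfresh : ∀ t ∈ T, ∀ j, a t j ∉ X ∪ Y ∪ Z)
    (hainj : ∀ t ∈ T, ∀ t' ∈ T, ∀ j j', a t j = a t' j' → t = t' ∧ j = j')
    (G : PartGraph 2)
    (hverts : G.verts = (X ∪ Y ∪ Z) ∪ T.biUnion fun t => Finset.image (a t) Finset.univ)
    (harcs : G.arcs = T.biUnion fun t => gadgetArcs2 a t)
    (hcountry : ∀ v, G.country v =
      if ∃ t ∈ T, v = a t 0 ∨ v = a t 2 ∨ v = a t 4 then 1 else 0) :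
    (∃ P : Finset (List ℕ), IsGammaPackingG G gadgetParams2 P ∧
        ∀ v ∈ G.verts, ∃ l ∈ P, v ∈ l) ↔
      ∃ M ⊆ T, ∀ u ∈ X ∪ Y ∪ Z,
        ∃! t, t ∈ M ∧ (u = t.1 ∨ u = t.2.1 ∨ u = t.2.2) := by
  have hG : IsGadget2 X Y Z T a G :=
    ⟨hXY, hXZ, hYZ, hTsub, hfresh, hainj, hverts, harcs, hcountry⟩
  constructor
  · rintro ⟨P, hP, hcov⟩
    exact hG.exists_matching hP hcov
  · rintro ⟨M, hMT, hM⟩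
    exact hG.exists_packing_of_matching hMT hM

/-- In the `icl = 2` gadget construction, `G` has a perfect
`Γ`-cycle packing if and only if `T` contains a perfect matching, i.e. a
subset `M ⊆ T` such that every element of `X ∪ Y ∪ Z` belongs to exactly one
triple of `M`. -/
theorem gadget2_perfect_packing_iff_matching
    (X Y Z : Finset ℕ) (T : Finset (ℕ × ℕ × ℕ)) (a : ℕ × ℕ × ℕ → Fin 6 → ℕ)
    (hX : X.Nonempty) (hY : Y.Nonempty) (hZ : Z.Nonempty)
    (hXY : Disjoint X Y) (hXZ : Disjoint X Z) (hYZ : Disjoint Y Z)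
    (hT : T.Nonempty) (hTsub : ∀ t ∈ T, t.1 ∈ X ∧ t.2.1 ∈ Y ∧ t.2.2 ∈ Z)
    (hfresh : ∀ t ∈ T, ∀ j, a t j ∉ X ∪ Y ∪ Z)
    (hainj : ∀ t ∈ T, ∀ t' ∈ T, ∀ j j', a t j = a t' j' → t = t' ∧ j = j')
    (G : PartGraph 2)
    (hverts : G.verts = (X ∪ Y ∪ Z) ∪ T.biUnion fun t => Finset.image (a t) Finset.univ)
    (harcs : G.arcs = T.biUnion fun t => gadgetArcs2 a t)
    (hcountry : ∀ v, G.country v =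
      if ∃ t ∈ T, v = a t 0 ∨ v = a t 2 ∨ v = a t 4 then 1 else 0) :
    (∃ P : Finset (List ℕ), IsGammaPackingG G gadgetParams2 P ∧
        ∀ v ∈ G.verts, ∃ l ∈ P, v ∈ l) ↔
      ∃ M ⊆ T, ∀ u ∈ X ∪ Y ∪ Z,
        ∃! t, t ∈ M ∧ (u = t.1 ∨ u = t.2.1 ∨ u = t.2.2) :=
  gadget2_perfect_packing_iff_matching_general X Y Z T a hXY hXZ hYZ hTsub hfresh hainj G hverts
    harcs hcountry
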